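/- arXiv:2005.08564 — 7 statements merged into one kernel-verified Lean document; each statement's English description precedes it below -/
import Mathlib

section
/- Let (X,◃) be a quandle, S a set and α a dynamical 2-cocycle. For each x ∈ X define a binary operation on S by s *_x t := α_{x,x}(s,t). Then for every x ∈ X, (S, *_x) is a quandle, and for all x,z ∈ X and u ∈ S, the map φ : S → S given by φ(s) = α_{x,z}(s,u) is a bijection satisfying φ(s *_x t) = φ(s) *_{x◃z} φ(t) for all s,t ∈ S; in particular (S,*_x) and (S,*_{x◃z}) are isomorphic quandles. -/
/-- A binary operation is a quandle operation: idempotent, right translations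
are bijections, and right self-distributive. -/
def IsQuandleOp {Q : Type*} (op : Q → Q → Q) : Prop :=
  (∀ x, op x x = x) ∧
  (∀ y, Function.Bijective (fun x => op x y)) ∧
  (∀ x y z, op (op x y) z = op (op x z) (op y z))

/-- A dynamical 2-cocycle on a quandle `(X, op)` with values in a set `S`. -/
def IsDynCocycle {X S : Type*} (op : X → X → X) (α : X → X → S → S → S) : Prop :=
  (∀ (x : X) (s : S), α x x s s = s) ∧
  (∀ (x y : X) (t : S), Function.Bijective (fun s => α x y s t)) ∧
  (∀ (x y z : X) (s t u : S),
    α (op x y) z (α x y s t) u = α (op x z) (op y z) (α x z s u) (α y z t u))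

theorem stmt2 {X S : Type*} (op : X → X → X) (hX : IsQuandleOp op)
    (α : X → X → S → S → S) (hα : IsDynCocycle op α) :
    (∀ x : X, IsQuandleOp (fun s t : S => α x x s t)) ∧
    (∀ (x z : X) (u : S),
      Function.Bijective (fun s : S => α x z s u) ∧
      ∀ s t : S,
        α x z (α x x s t) u = α (op x z) (op x z) (α x z s u) (α x z t u)) := by
  obtain ⟨hid, hbij, hcoc⟩ := hα
  obtain ⟨hXid, _, _⟩ := hX
  refine ⟨fun x => ⟨fun s => hid x s, fun t => hbij x x t, fun s t u => ?_⟩,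
    fun x z u => ⟨hbij x z u, fun s t => ?_⟩⟩
  · have h := hcoc x x x s t u
    simpa [hXid x] using h
  · have h := hcoc x x z s t u
    simpa [hXid x] using h
end

section
/- Let (X,◃) be a quandle, A an abelian group written multiplicatively, α a quandle 2-cocycle and E = X ×_α A the abelian extension. Let φ be a quandle automorphism of X and θ a group automorphism of A. Then the following are equivalent: (a) there exists a map μ : X → A such that ψ(x,s) := (φ(x), μ_x·θ(s)) is a quandle automorphism of E; (b) ^{(φ,θ)}α is cohomologous to α, i.e., there exists a map λ : X → A with θ(α_{φ⁻¹(x),φ⁻¹(y)}) = α_{x,y}·λ_x·λ_{x◃y}⁻¹ for all x,y ∈ X. -/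
/-- A quandle 2-cocycle on `(X, op)` with values in an abelian group `A`. -/
def IsQuandle2Cocycle {X A : Type*} [CommGroup A] (op : X → X → X)
    (α : X → X → A) : Prop :=
  (∀ x y z, α x y * α (op x y) z = α x z * α (op x z) (op y z)) ∧
  (∀ x, α x x = 1)

/-- The quandle operation of the abelian extension `X ×_α A`:
`(x,s) * (y,t) = (x ◃ y, s · α_{x,y})`. -/
def abExtOp {X A : Type*} [CommGroup A] (op : X → X → X) (α : X → X → A) :
    X × A → X × A → X × A :=
  fun p q => (op p.1 q.1, p.2 * α p.1 q.1)

theorem stmt10 {X A : Type*} [CommGroup A]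
    (op : X → X → X) (hX : IsQuandleOp op)
    (α : X → X → A) (hα : IsQuandle2Cocycle op α)
    (φ : X ≃ X) (hφ : ∀ a b, φ (op a b) = op (φ a) (φ b)) (θ : A ≃* A) :
    (∃ μ : X → A,
        Function.Bijective
          (fun p : X × A => ((φ p.1, μ p.1 * θ p.2) : X × A)) ∧
        ∀ p q : X × A,
          ((φ (abExtOp op α p q).1,
            μ (abExtOp op α p q).1 * θ (abExtOp op α p q).2) : X × A) =
            abExtOp op α ((φ p.1, μ p.1 * θ p.2)) ((φ q.1, μ q.1 * θ q.2))) ↔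
      (∃ l : X → A, ∀ x y : X,
        θ (α (φ.symm x) (φ.symm y)) = α x y * l x * (l (op x y))⁻¹) := by
  constructor
  · rintro ⟨μ, -, hhom⟩
    refine ⟨fun x => μ (φ.symm x), fun x y => ?_⟩
    have h := congrArg Prod.snd (hhom (φ.symm x, 1) (φ.symm y, 1))
    simp only [abExtOp, one_mul, map_one, map_mul] at h
    have hop : φ.symm (op x y) = op (φ.symm x) (φ.symm y) := by
      apply φ.injective
      rw [hφ, φ.apply_symm_apply, φ.apply_symm_apply, φ.apply_symm_apply]
    rw [φ.apply_symm_apply, φ.apply_symm_apply] at h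
    dsimp only
    rw [hop, eq_mul_inv_iff_mul_eq, mul_comm, mul_comm (α x y)]
    simpa using h
  · rintro ⟨l, hl⟩
    refine ⟨fun x => l (φ x), ⟨?_, ?_⟩⟩
    · constructor
      · rintro ⟨x, s⟩ ⟨y, t⟩ h
        simp only [Prod.mk.injEq] at h
        obtain ⟨h1, h2⟩ := h
        have hx : x = y := φ.injective h1
        subst hx
        have : θ s = θ t := by
          have := mul_left_cancel h2; exact this
        exact Prod.ext rfl (θ.injective this)
      · rintro ⟨x, s⟩
        exact ⟨(φ.symm x, θ.symm ((l (φ (φ.symm x)))⁻¹ * s)), by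
          simp [φ.apply_symm_apply]⟩
    · rintro ⟨x, s⟩ ⟨y, t⟩
      simp only [abExtOp, map_mul]
      refine Prod.ext (hφ x y) ?_
      have h := hl (φ x) (φ y)
      rw [φ.symm_apply_apply, φ.symm_apply_apply] at h
      have hop : op (φ x) (φ y) = φ (op x y) := (hφ x y).symm
      rw [hop] at h
      rw [h]
      simp [mul_comm, mul_left_comm, mul_assoc]
end

section
/- Let (X,◃) be a quandle, A an abelian group written multiplicatively, α a quandle 2-cocycle and E = X ×_α A the abelian extension. For a map λ : X → A, the map ψ_λ : E → E given by ψ_λ(x,s) = (x, λ_x·s) is a quandle automorphism of E if and only if λ_x = λ_{x◃y} for all x,y ∈ X (i.e., λ is a quandle 1-cocycle). Consequently, the group of quandle automorphisms of E of this form is isomorphic to the group Z¹(X;A) = {λ : X → A | λ_x = λ_{x◃y} for all x,y ∈ X} under pointwise multiplication. -/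
/-- The map `ψ_λ(x,s) = (x, λ_x · s)`. -/
def psiMap {X A : Type*} [CommGroup A] (l : X → A) : X × A → X × A :=
  fun p => (p.1, l p.1 * p.2)

theorem stmt11 {X A : Type*} [CommGroup A]
    (op : X → X → X) (hX : IsQuandleOp op)
    (α : X → X → A) (hα : IsQuandle2Cocycle op α) :
    -- ψ_λ is a quandle automorphism of E iff λ is a quandle 1-cocycle
    (∀ l : X → A,
      (Function.Bijective (psiMap l) ∧
        ∀ p q : X × A,
          psiMap l (abExtOp op α p q) =
            abExtOp op α (psiMap l p) (psiMap l q)) ↔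
      (∀ x y : X, l x = l (op x y))) ∧
    -- the correspondence λ ↦ ψ_λ is multiplicative and injective, so the group
    -- of such automorphisms is isomorphic to Z¹(X;A) with pointwise product
    (∀ l l' : X → A,
      psiMap (fun x => l x * l' x) = fun p => psiMap l (psiMap l' p)) ∧
    Function.Injective (fun l : X → A => psiMap l) := by
  have hbij : ∀ l : X → A, Function.Bijective (psiMap (X := X) l) := by
    intro l
    refine ⟨?_, ?_⟩
    · intro p q h
      simp only [psiMap, Prod.mk.injEq] at h
      obtain ⟨h1, h2⟩ := h
      rw [h1] at h2
      exact Prod.ext h1 (mul_left_cancel h2)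
    · intro p
      exact ⟨(p.1, (l p.1)⁻¹ * p.2), by simp [psiMap]⟩
  refine ⟨?_, ?_, ?_⟩
  · intro l
    constructor
    · rintro ⟨-, hhom⟩ x y
      have := hhom (x, 1) (y, 1)
      simp only [psiMap, abExtOp, Prod.mk.injEq] at this
      obtain ⟨-, h2⟩ := this
      rw [one_mul] at h2
      simpa using (mul_right_cancel h2).symm
    · intro hl
      refine ⟨hbij l, ?_⟩
      intro p q
      simp only [psiMap, abExtOp, Prod.mk.injEq]
      rw [← hl p.1 q.1]
      exact ⟨trivial, (mul_assoc _ _ _).symm⟩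
  · intro l l'
    funext p
    simp [psiMap, mul_assoc]
  · intro l l' h
    funext x
    have := congrFun h (x, 1)
    simp only [psiMap, Prod.mk.injEq] at this
    simpa using this.2
end

section
/- Let (X,◃) be a quandle and A an abelian group written multiplicatively such that every quandle 2-cocycle on X with values in A is cohomologous to the trivial cocycle 1 (i.e., H²(X;A) = 1). Let α be a quandle 2-cocycle and E = X ×_α A the abelian extension. Then for every quandle automorphism φ of X and every group automorphism θ of A there exists a map μ : X → A such that ψ(x,s) := (φ(x), μ_x·θ(s)) is a quandle automorphism of E; that is, every automorphism in Aut(X) × Aut(A) extends to an automorphism of the extension E. -/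
theorem stmt12 {X A : Type*} [CommGroup A]
    (op : X → X → X) (hX : IsQuandleOp op)
    -- H²(X;A) = 1: every quandle 2-cocycle is cohomologous to the trivial one
    (hH2 : ∀ β : X → X → A, IsQuandle2Cocycle op β →
      ∃ l : X → A, ∀ x y, (1 : A) = l (op x y) * (l x)⁻¹ * β x y)
    (α : X → X → A) (hα : IsQuandle2Cocycle op α)
    (φ : X ≃ X) (hφ : ∀ a b, φ (op a b) = op (φ a) (φ b)) (θ : A ≃* A) :
    ∃ μ : X → A,
      Function.Bijective
        (fun p : X × A => ((φ p.1, μ p.1 * θ p.2) : X × A)) ∧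
      ∀ p q : X × A,
        ((φ (abExtOp op α p q).1,
          μ (abExtOp op α p q).1 * θ (abExtOp op α p q).2) : X × A) =
          abExtOp op α ((φ p.1, μ p.1 * θ p.2)) ((φ q.1, μ q.1 * θ q.2)) := by
  classical
  set γ : X → X → A := fun x y => θ (α x y) * (α (φ x) (φ y))⁻¹ with hγ
  have hγc : IsQuandle2Cocycle op γ := by
    constructor
    · intro x y z
      have h1 := hα.1 x y z
      have h2 := hα.1 (φ x) (φ y) (φ z)
      simp only [hγ, hφ]
      calc θ (α x y) * (α (φ x) (φ y))⁻¹ *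
            (θ (α (op x y) z) * (α (op (φ x) (φ y)) (φ z))⁻¹)
          = θ (α x y * α (op x y) z) *
            (α (φ x) (φ y) * α (op (φ x) (φ y)) (φ z))⁻¹ := by
            rw [map_mul, mul_inv]; ac_rfl
        _ = θ (α x z * α (op x z) (op y z)) *
            (α (φ x) (φ z) * α (op (φ x) (φ z)) (op (φ y) (φ z)))⁻¹ := by
            rw [h1, h2]
        _ = _ := by rw [map_mul, mul_inv]; ac_rfl
    · intro x
      simp [hγ, hα.2]
  obtain ⟨l, hl⟩ := hH2 γ hγc
  refine ⟨l, ?_, ?_⟩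
  · constructor
    · rintro ⟨x, s⟩ ⟨y, t⟩ h
      simp only [Prod.mk.injEq] at h
      obtain ⟨h1, h2⟩ := h
      have hx : x = y := φ.injective h1
      subst hx
      have : θ s = θ t := by
        have := mul_left_cancel h2
        exact this
      exact Prod.ext rfl (θ.injective this)
    · rintro ⟨x, s⟩
      exact ⟨(φ.symm x, θ.symm ((l (φ.symm x))⁻¹ * s)), by simp⟩
  · rintro ⟨x, s⟩ ⟨y, t⟩
    simp only [abExtOp, hφ]
    refine Prod.ext rfl ?_
    have key := hl x y
    have hkey : θ (α x y) * (α (φ x) (φ y))⁻¹ = l x * (l (op x y))⁻¹ := by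
      have h0 : (1 : A) = l (op x y) * (l x)⁻¹ * (θ (α x y) * (α (φ x) (φ y))⁻¹) := key
      calc θ (α x y) * (α (φ x) (φ y))⁻¹
          = l x * (l (op x y))⁻¹ * (l (op x y) * (l x)⁻¹ * (θ (α x y) * (α (φ x) (φ y))⁻¹)) := by group
        _ = l x * (l (op x y))⁻¹ * 1 := by rw [← h0]
        _ = l x * (l (op x y))⁻¹ := mul_one _
    have hmain : l (op x y) * θ (α x y) = l x * α (φ x) (φ y) := by
      calc l (op x y) * θ (α x y)
          = l (op x y) * (θ (α x y) * (α (φ x) (φ y))⁻¹) * α (φ x) (φ y) := by group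
        _ = l (op x y) * (l x * (l (op x y))⁻¹) * α (φ x) (φ y) := by rw [hkey]
        _ = l x * α (φ x) (φ y) := by
            rw [mul_comm (l x) (l (op x y))⁻¹, ← mul_assoc, mul_assoc (l (op x y) * (l (op x y))⁻¹)]
            simp
    simp only [map_mul]
    calc l (op x y) * (θ s * θ (α x y)) = θ s * (l (op x y) * θ (α x y)) := by ac_rfl
      _ = θ s * (l x * α (φ x) (φ y)) := by rw [hmain]
      _ = l x * θ s * α (φ x) (φ y) := by ac_rfl
end

section
/- Let π : E → G be a surjective group homomorphism with kernel A. Then there exists a dynamical 2-cocycle α on the core quandle Core(G) with values in the set A such that α_{x,x}(s,t) = t·s⁻¹·t for all x ∈ G and s,t ∈ A, together with a bijection Ψ : E → G×A satisfying Ψ(b·a⁻¹·b) = Ψ(a) * Ψ(b) for all a,b ∈ E, where * is the operation of the extension quandle Core(G) ×_α A; that is, Core(E) is isomorphic as a quandle to Core(G) ×_α A, and on each fiber {x}×A the induced quandle operation is the core operation of the group A. -/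
/-!
Choosing a set-theoretic section `σ` of `π` identifies `E` with `G × A` via
`e ↦ (π e, σ(π e)⁻¹ e)`. Since `π` is a quandle map `Core E → Core G`, the core operation of `E`
sends a pair of fibres into a single fibre, and the second coordinate of the result defines `α`.
The cocycle identities are then the quandle axioms of `Core E` read through this identification;
within one fibre the section cancels, `(σx t)(σx s)⁻¹(σx t) = σx (t s⁻¹ t)`, leaving the core
operation of `A`.
-/

open Quandles Function

/-- Racks in Mathlib act on the left: here `x ◃ y = x * y⁻¹ * x`, which is `y ◃ x` in the
right-operation convention of the statement. -/
def Core (G : Type*) := G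

instance Core.instQuandle (G : Type*) [Group G] : Quandle (Core G) where
  act := fun x y : G => x * y⁻¹ * x
  self_distrib {x y z : G} :=
    show x * (y * z⁻¹ * y)⁻¹ * x = x * y⁻¹ * x * (x * z⁻¹ * x)⁻¹ * (x * y⁻¹ * x) by group
  invAct := fun x y : G => x * y⁻¹ * x
  left_inv (x y : G) := show x * (x * y⁻¹ * x)⁻¹ * x = y by group
  right_inv (x y : G) := show x * (x * y⁻¹ * x)⁻¹ * x = y by group
  fix {x : G} := show x * x⁻¹ * x = x by group

section FiberCocycle

variable {Q X S : Type*}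

def fiberCocycle [Shelf Q] (e : Q ≃ X × S) (x y : X) (s t : S) : S :=
  (e (e.symm (y, t) ◃ e.symm (x, s))).2

variable (e : Q ≃ X × S)

theorem apply_act_eq_fiberCocycle [Shelf Q] [Shelf X]
    (he : ∀ a b : Q, (e (a ◃ b)).1 = (e a).1 ◃ (e b).1) (a b : Q) :
    e (a ◃ b) = ((e a).1 ◃ (e b).1, fiberCocycle e (e b).1 (e a).1 (e b).2 (e a).2) := by
  ext
  · exact he a b
  · simp [fiberCocycle]

theorem symm_fiberCocycle [Shelf Q] [Shelf X]
    (he : ∀ a b : Q, (e (a ◃ b)).1 = (e a).1 ◃ (e b).1) (x y : X) (s t : S) :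
    e.symm (y ◃ x, fiberCocycle e x y s t) = e.symm (y, t) ◃ e.symm (x, s) := by
  rw [Equiv.symm_apply_eq, apply_act_eq_fiberCocycle e he]
  simp

theorem fiberCocycle_self_self [Quandle Q] (x : X) (s : S) : fiberCocycle e x x s s = s := by
  simp [fiberCocycle, Quandle.fix]

theorem bijective_fiberCocycle [Rack Q] [Rack X]
    (he : ∀ a b : Q, (e (a ◃ b)).1 = (e a).1 ◃ (e b).1) (x y : X) (t : S) :
    Bijective fun s => fiberCocycle e x y s t := by
  constructor
  · intro s s' h
    have := congrArg (fun r => e.symm (y ◃ x, r)) h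
    simpa [symm_fiberCocycle e he, Rack.left_cancel] using this
  · intro r
    set a := e.symm (y, t) ◃⁻¹ e.symm (y ◃ x, r)
    have hact : e.symm (y, t) ◃ a = e.symm (y ◃ x, r) := Rack.act_invAct_eq _ _
    have hx : (e a).1 = x := by
      have := congrArg (fun q => (e q).1) hact
      exact (Rack.left_cancel y).mp (by simpa [he] using this)
    refine ⟨(e a).2, ?_⟩
    have ha : e.symm (x, (e a).2) = a := by rw [← hx]; exact e.symm_apply_apply a
    simp only [fiberCocycle, ha, hact, Equiv.apply_symm_apply]

theorem fiberCocycle_act [Shelf Q] [Shelf X]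
    (he : ∀ a b : Q, (e (a ◃ b)).1 = (e a).1 ◃ (e b).1) (x y z : X) (s t u : S) :
    fiberCocycle e (y ◃ x) z (fiberCocycle e x y s t) u =
      fiberCocycle e (z ◃ x) (z ◃ y) (fiberCocycle e x z s u) (fiberCocycle e y z t u) := by
  change (e (e.symm (z, u) ◃ e.symm (y ◃ x, fiberCocycle e x y s t))).2 =
    (e (e.symm (z ◃ y, fiberCocycle e y z t u) ◃ e.symm (z ◃ x, fiberCocycle e x z s u))).2
  rw [symm_fiberCocycle e he, symm_fiberCocycle e he, symm_fiberCocycle e he, Shelf.self_distrib]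

theorem isDynCocycle_fiberCocycle [Quandle Q] [Rack X]
    (he : ∀ a b : Q, (e (a ◃ b)).1 = (e a).1 ◃ (e b).1) :
    IsDynCocycle (fun x y : X => y ◃ x) (fiberCocycle e) :=
  ⟨fiberCocycle_self_self e, bijective_fiberCocycle e he, fiberCocycle_act e he⟩

end FiberCocycle

namespace MonoidHom

variable {E G : Type*} [Group E] [Group G]

def kerCoords (π : E →* G) (σ : G → E) (hσ : RightInverse σ π) : E ≃ G × π.ker where
  toFun e := (π e, ⟨(σ (π e))⁻¹ * e, by simp [mem_ker, hσ (π e)]⟩)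
  invFun p := σ p.1 * p.2
  left_inv e := by simp
  right_inv p := by
    have hp : π p.2 = 1 := p.2.2
    ext <;> simp [hp, hσ p.1]

variable (π : E →* G) (σ : G → E) (hσ : RightInverse σ π)

theorem kerCoords_section_mul (x : G) (s : π.ker) : π.kerCoords σ hσ (σ x * s) = (x, s) :=
  (π.kerCoords σ hσ).apply_symm_apply (x, s)

def coreKerCoords : Core E ≃ Core G × π.ker := π.kerCoords σ hσ

theorem coreKerCoords_act (a b : Core E) :
    (π.coreKerCoords σ hσ (a ◃ b)).1 =
      (π.coreKerCoords σ hσ a).1 ◃ (π.coreKerCoords σ hσ b).1 :=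
  (fun a b : E => show π (a * b⁻¹ * a) = π a * (π b)⁻¹ * π a by simp) a b

theorem fiberCocycle_coreKerCoords_self (x : G) (s t : π.ker) :
    fiberCocycle (π.coreKerCoords σ hσ) x x s t = t * s⁻¹ * t :=
  calc fiberCocycle (π.coreKerCoords σ hσ) x x s t
      = (π.kerCoords σ hσ (σ x * t * (σ x * s)⁻¹ * (σ x * t))).2 := rfl
    _ = (π.kerCoords σ hσ (σ x * ↑(t * s⁻¹ * t))).2 := by congr 2; push_cast; group
    _ = t * s⁻¹ * t := by rw [kerCoords_section_mul]

end MonoidHom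

theorem stmt15 {E G : Type*} [Group E] [Group G]
    (π : E →* G) (hπ : Function.Surjective π) :
    ∃ α : G → G → π.ker → π.ker → π.ker,
      -- α is a dynamical 2-cocycle on the core quandle Core(G)
      IsDynCocycle (fun x y : G => y * x⁻¹ * y) α ∧
      -- on each fiber the induced operation is the core operation of A
      (∀ (x : G) (s t : π.ker), α x x s t = t * s⁻¹ * t) ∧
      -- Core(E) ≅ Core(G) ×_α A
      ∃ Ψ : E → G × π.ker, Function.Bijective Ψ ∧
        ∀ a b : E,
          Ψ (b * a⁻¹ * b) =
            ((Ψ b).1 * (Ψ a).1⁻¹ * (Ψ b).1,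
              α (Ψ a).1 (Ψ b).1 (Ψ a).2 (Ψ b).2) := by
  obtain ⟨σ, hσ⟩ := hπ.hasRightInverse
  let e := π.coreKerCoords σ hσ
  have he := π.coreKerCoords_act σ hσ
  exact ⟨fiberCocycle e, isDynCocycle_fiberCocycle e he, π.fiberCocycle_coreKerCoords_self σ hσ,
    e, e.bijective, fun a b => apply_act_eq_fiberCocycle e he b a⟩
end

section
/- Let n ∈ ℤ and let π : E → G be a surjective group homomorphism with kernel A. Then there exists a dynamical 2-cocycle α on the quandle Conj_n(G) with values in the set A such that α_{1,1}(s,t) = t⁻ⁿ·s·tⁿ for all s,t ∈ A, together with a bijection Ψ : E → G×A satisfying Ψ(b⁻ⁿ·a·bⁿ) = Ψ(a) * Ψ(b) for all a,b ∈ E, where * is the operation of the extension quandle Conj_n(G) ×_α A; that is, Conj_n(E) is isomorphic as a quandle to Conj_n(G) ×_α A, and on the fiber {1}×A the induced quandle operation is that of Conj_n(A). -/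
theorem stmt16 {E G : Type*} [Group E] [Group G] (n : ℤ)
    (π : E →* G) (hπ : Function.Surjective π) :
    ∃ α : G → G → π.ker → π.ker → π.ker,
      -- α is a dynamical 2-cocycle on the quandle Conj_n(G)
      IsDynCocycle (fun x y : G => y ^ (-n) * x * y ^ n) α ∧
      -- on the fiber over 1 the induced operation is that of Conj_n(A)
      (∀ s t : π.ker, α 1 1 s t = t ^ (-n) * s * t ^ n) ∧
      -- Conj_n(E) ≅ Conj_n(G) ×_α A
      ∃ Ψ : E → G × π.ker, Function.Bijective Ψ ∧
        ∀ a b : E,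
          Ψ (b ^ (-n) * a * b ^ n) =
            ((Ψ b).1 ^ (-n) * (Ψ a).1 * (Ψ b).1 ^ n,
              α (Ψ a).1 (Ψ b).1 (Ψ a).2 (Ψ b).2) := by
  classical
  -- a section of π sending 1 to 1
  obtain ⟨σ, hσ1, hσ⟩ : ∃ σ : G → E, σ 1 = 1 ∧ ∀ g, π (σ g) = g := by
    refine ⟨Function.update (Function.surjInv hπ) 1 1, Function.update_self _ _ _, fun g => ?_⟩
    by_cases h : g = 1
    · subst h; simp [Function.update_self]
    · simp [Function.update_of_ne h, Function.surjInv_eq hπ]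
  have hker : ∀ (x : G) (s : π.ker), π (σ x * (s : E)) = x := fun x s => by
    have hs : π (s : E) = 1 := s.2
    simp [map_mul, hσ, hs]
  -- conjugation-power helpers
  have hcE : ∀ (c h : E) (k : ℤ), (c ^ (-n) * h * c ^ n) ^ k = c ^ (-n) * h ^ k * c ^ n := by
    intro c h k
    rw [show (c : E) ^ n = (c ^ (-n))⁻¹ by rw [zpow_neg, inv_inv], conj_zpow]
  have hcG : ∀ (c h : G) (k : ℤ), (c ^ (-n) * h * c ^ n) ^ k = c ^ (-n) * h ^ k * c ^ n := by
    intro c h k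
    rw [show (c : G) ^ n = (c ^ (-n))⁻¹ by rw [zpow_neg, inv_inv], conj_zpow]
  have hd : ∀ d : E, d ^ (-n) * d * d ^ n = d := by
    intro d
    rw [mul_assoc, ← zpow_one_add, ← zpow_add]
    norm_num
  set q : G → G → G := fun x y => y ^ (-n) * x * y ^ n with hq
  have hmem : ∀ (x y : G) (s t : π.ker),
      (σ (q x y))⁻¹ * ((σ y * (t : E)) ^ (-n) * (σ x * (s : E)) * (σ y * (t : E)) ^ n)
        ∈ π.ker := by
    intro x y s t
    simp only [MonoidHom.mem_ker, map_mul, map_inv, map_zpow, hσ, hker, hq]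
    group
  refine ⟨fun x y s t => ⟨_, hmem x y s t⟩, ⟨?_, ?_, ?_⟩, ?_, ?_⟩
  · -- α x x s s = s
    intro x s
    have hx : q x x = x := by simp only [hq]; group
    apply Subtype.ext
    simp only [hx, hd]
    group
  · -- bijectivity in the first argument
    intro x y t
    refine Function.bijective_iff_has_inverse.2
      ⟨fun s' => ⟨(σ x)⁻¹ * ((σ y * (t : E)) ^ n * (σ (q x y) * (s' : E)) *
        (σ y * (t : E)) ^ (-n)), ?_⟩, fun s => ?_, fun s' => ?_⟩
    · have hs' : π (s' : E) = 1 := s'.2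
      simp only [MonoidHom.mem_ker, map_mul, map_inv, map_zpow, hσ, hker, hs', hq]
      group
    · apply Subtype.ext
      simp only []
      group
    · apply Subtype.ext
      simp only []
      group
  · -- cocycle condition
    intro x y z s t u
    have hqq : q (q x y) z = q (q x z) (q y z) := by
      simp only [hq, hcG]
      group
    apply Subtype.ext
    simp only [hqq, mul_inv_cancel_left, hcE]
    group
  · -- fiber over 1
    intro s t
    have hq11 : q 1 1 = 1 := by simp [hq]
    apply Subtype.ext
    simp only [hq11, hσ1, Subgroup.coe_mul, SubgroupClass.coe_zpow]
    group
  · -- the bijection Ψ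
    refine ⟨fun a => (π a, ⟨(σ (π a))⁻¹ * a, by simp [MonoidHom.mem_ker, map_mul, hσ]⟩),
      Function.bijective_iff_has_inverse.2
        ⟨fun p => σ p.1 * (p.2 : E), fun a => by simp, fun p => ?_⟩, fun a b => ?_⟩
    · obtain ⟨x, s⟩ := p
      refine Prod.ext (by simpa using hker x s) (Subtype.ext ?_)
      simp only [hker x s]
      group
    · have hpi : π (b ^ (-n) * a * b ^ n) = q (π a) (π b) := by
        simp [hq, map_mul, map_zpow]
      refine Prod.ext ?_ (Subtype.ext ?_)
      · simp [hq]
      · simp only [hpi, mul_inv_cancel_left]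
end

section
/- Let π : E → G be a surjective group homomorphism with kernel A, and let f be a group automorphism of E with f(A) = A. Let f₁ be the induced automorphism of G (so f₁∘π = π∘f) and f₂ the restriction of f to A. Then there exists a dynamical 2-cocycle α on the generalized Alexander quandle Alex_{f₁}(G) with values in the set A such that α_{1,1}(s,t) = f₂(s·t⁻¹)·t for all s,t ∈ A, together with a bijection Ψ : E → G×A satisfying Ψ(f(a·b⁻¹)·b) = Ψ(a) * Ψ(b) for all a,b ∈ E, where * is the operation of the extension quandle Alex_{f₁}(G) ×_α A; that is, Alex_f(E) is isomorphic as a quandle to Alex_{f₁}(G) ×_α A, and on the fiber {1}×A the induced quandle operation is that of Alex_{f₂}(A). -/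
/-!
A set-theoretic section `σ` of `π` trivializes `E` as `G × A` via
`e ↦ (π e, e σ(π e)⁻¹)`. Since `π` is a quandle map `Alex_f(E) → Alex_{f₁}(G)`, transporting the
quandle operation of `Alex_f(E)` along any such trivialization yields an operation of the form
`(x, s) * (y, t) = (x ◃ y, α_{x,y}(s, t))`, and the quandle axioms of `Alex_f(E)` become exactly the
dynamical cocycle conditions on `α`. Right cosets make the section cancel on each fiber, which
gives `α_{x,x}(s, t) = f₂(s t⁻¹) t`.
-/

open Quandles

section Trivialization

variable {Q X S : Type*} [Quandle Q]

/-- `α_{x,y}(s, t)` is the fibre coordinate of the paper's `Ψ⁻¹(x, s) ◃ Ψ⁻¹(y, t)`, written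
`Ψ⁻¹(y, t) ◃ Ψ⁻¹(x, s)` since Mathlib's quandles act on the left. -/
def cocycleOfTrivialization (Ψ : Q ≃ X × S) (x y : X) (s t : S) : S :=
  (Ψ (Ψ.symm (y, t) ◃ Ψ.symm (x, s))).2

variable (op : X → X → X) (Ψ : Q ≃ X × S)

theorem apply_act_eq_of_fst (hΨ : ∀ a b : Q, (Ψ (b ◃ a)).1 = op (Ψ a).1 (Ψ b).1) (a b : Q) :
    Ψ (b ◃ a) = (op (Ψ a).1 (Ψ b).1,
      cocycleOfTrivialization Ψ (Ψ a).1 (Ψ b).1 (Ψ a).2 (Ψ b).2) :=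
  Prod.ext (hΨ a b) (by simp [cocycleOfTrivialization])

theorem symm_act_symm_eq (hΨ : ∀ a b : Q, (Ψ (b ◃ a)).1 = op (Ψ a).1 (Ψ b).1)
    (x y : X) (s t : S) :
    Ψ.symm (y, t) ◃ Ψ.symm (x, s) = Ψ.symm (op x y, cocycleOfTrivialization Ψ x y s t) := by
  rw [Ψ.eq_symm_apply, apply_act_eq_of_fst op Ψ hΨ]
  simp

theorem isDynCocycle_cocycleOfTrivialization (hop : ∀ y, Function.Injective (op · y))
    (hΨ : ∀ a b : Q, (Ψ (b ◃ a)).1 = op (Ψ a).1 (Ψ b).1) :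
    IsDynCocycle op (cocycleOfTrivialization Ψ) := by
  have hsymm := symm_act_symm_eq op Ψ hΨ
  refine ⟨fun x s => by simp [cocycleOfTrivialization], fun x y t => ⟨?_, ?_⟩, ?_⟩
  · intro s s' h
    have : Ψ.symm (y, t) ◃ Ψ.symm (x, s) = Ψ.symm (y, t) ◃ Ψ.symm (x, s') := by
      rw [hsymm, hsymm]
      exact congrArg _ (congrArg _ h)
    rw [Rack.left_cancel] at this
    exact (Prod.mk.inj (Ψ.symm.injective this)).2
  · intro u
    -- by injectivity of `op · y`, the preimage of `(op x y, u)` under `Ψ⁻¹ (y, t) ◃ ·` lies over `x`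
    set q := Ψ.symm (y, t) ◃⁻¹ Ψ.symm (op x y, u)
    have hq : Ψ (Ψ.symm (y, t) ◃ q) = (op x y, u) := by simp [q, Rack.act_invAct_eq]
    have hqx : (Ψ q).1 = x := hop y (by simpa [hΨ] using congrArg Prod.fst hq)
    refine ⟨(Ψ q).2, ?_⟩
    have : Ψ.symm (x, (Ψ q).2) = q := by rw [← hqx]; simp
    simp only [cocycleOfTrivialization, this, hq]
  · intro x y z s t u
    change (Ψ (Ψ.symm (z, u) ◃ Ψ.symm (op x y, _))).2 =
      (Ψ (Ψ.symm (op y z, _) ◃ Ψ.symm (op x z, _))).2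
    rw [← hsymm, ← hsymm, ← hsymm, Shelf.self_distrib]

end Trivialization

namespace MonoidHom

variable {E G : Type*} [Group E] [Group G]

def equivProdKer (π : E →* G) (σ : G → E) (hσ : Function.RightInverse σ π) : E ≃ G × π.ker where
  toFun e := (π e, ⟨e * (σ (π e))⁻¹, by simp [mem_ker, hσ (π e)]⟩)
  invFun p := p.2 * σ p.1
  left_inv e := by simp
  right_inv p := by
    have hp : π (p.2 * σ p.1) = p.1 := by simp [mem_ker.mp p.2.2, hσ p.1]
    ext <;> simp [hp]

variable (π : E →* G) (σ : G → E) (hσ : Function.RightInverse σ π)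

@[simp]
theorem equivProdKer_apply_fst (e : E) : (π.equivProdKer σ hσ e).1 = π e := rfl

theorem equivProdKer_apply_mul (s : π.ker) (x : G) : π.equivProdKer σ hσ (s * σ x) = (x, s) :=
  (π.equivProdKer σ hσ).apply_symm_apply (x, s)

end MonoidHom

section Alexander

variable {E : Type*} [Group E]

def AlexQuandle (_ : E ≃* E) : Type _ := E

def AlexQuandle.of (f : E ≃* E) : E ≃ AlexQuandle f := Equiv.refl E

instance (f : E ≃* E) : Quandle (AlexQuandle f) where
  act (b a : E) := f (a * b⁻¹) * b
  invAct (b a : E) := f.symm (a * b⁻¹) * b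
  self_distrib {x y z : E} :=
    show f (f (z * y⁻¹) * y * x⁻¹) * x =
      f (f (z * x⁻¹) * x * (f (y * x⁻¹) * x)⁻¹) * (f (y * x⁻¹) * x) by
    simp only [mul_inv_rev, map_mul, map_inv]
    group
  left_inv (b a : E) := show f.symm (f (a * b⁻¹) * b * b⁻¹) * b = a by simp
  right_inv (b a : E) := show f (f.symm (a * b⁻¹) * b * b⁻¹) * b = a by simp
  fix {a : E} := show f (a * a⁻¹) * a = a by simp

theorem AlexQuandle.of_act_of (f : E ≃* E) (a b : E) :
    of f b ◃ of f a = of f (f (a * b⁻¹) * b) := rfl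

theorem AlexQuandle.of_mul_act_of_mul (f : E ≃* E) (s t c : E) :
    of f (t * c) ◃ of f (s * c) = of f (f (s * t⁻¹) * (t * c)) := by
  rw [of_act_of, mul_inv_rev, mul_assoc s, mul_inv_cancel_left]

end Alexander

theorem stmt17_general {E G : Type*} [Group E] [Group G]
    (π : E →* G) (hπ : Function.Surjective π)
    (f : E ≃* E)
    (f₁ : G ≃* G) (hf₁ : ∀ a : E, f₁ (π a) = π (f a))
    (f₂ : π.ker → π.ker) (hf₂ : ∀ s : π.ker, (f₂ s : E) = f (s : E)) :
    ∃ α : G → G → π.ker → π.ker → π.ker,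
      -- α is a dynamical 2-cocycle on the quandle Alex_{f₁}(G)
      IsDynCocycle (fun x y : G => f₁ (x * y⁻¹) * y) α ∧
      -- on the fiber over 1 the induced operation is that of Alex_{f₂}(A)
      (∀ s t : π.ker, α 1 1 s t = f₂ (s * t⁻¹) * t) ∧
      -- Alex_f(E) ≅ Alex_{f₁}(G) ×_α A
      ∃ Ψ : E → G × π.ker, Function.Bijective Ψ ∧
        ∀ a b : E,
          Ψ (f (a * b⁻¹) * b) =
            (f₁ ((Ψ a).1 * (Ψ b).1⁻¹) * (Ψ b).1,
              α (Ψ a).1 (Ψ b).1 (Ψ a).2 (Ψ b).2) := by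
  obtain ⟨σ, hσ⟩ := hπ.hasRightInverse
  let Φ := π.equivProdKer σ hσ
  let Ψ : AlexQuandle f ≃ G × π.ker := (AlexQuandle.of f).symm.trans Φ
  have hΨ_of (e : E) : Ψ (AlexQuandle.of f e) = Φ e := rfl
  let op : G → G → G := fun x y => f₁ (x * y⁻¹) * y
  have hop : ∀ y, Function.Injective (op · y) := fun y =>
    (mul_left_injective y).comp (f₁.injective.comp (mul_left_injective y⁻¹))
  have hΨ : ∀ a b : AlexQuandle f, (Ψ (b ◃ a)).1 = op (Ψ a).1 (Ψ b).1 := fun a b => by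
    obtain ⟨a, rfl⟩ := (AlexQuandle.of f).surjective a
    obtain ⟨b, rfl⟩ := (AlexQuandle.of f).surjective b
    simp [AlexQuandle.of_act_of, hΨ_of, Φ, op, hf₁]
  refine ⟨cocycleOfTrivialization Ψ, isDynCocycle_cocycleOfTrivialization op Ψ hop hΨ,
    fun s t => ?_, Φ, Φ.bijective, fun a b => ?_⟩
  · have hk : f (s * (t : E)⁻¹) = f₂ (s * t⁻¹) := by simp [hf₂]
    change (Ψ (AlexQuandle.of f (t * σ 1) ◃ AlexQuandle.of f (s * σ 1))).2 = _
    rw [AlexQuandle.of_mul_act_of_mul, hΨ_of, hk, ← mul_assoc, ← Subgroup.coe_mul,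
      MonoidHom.equivProdKer_apply_mul]
  · have h := apply_act_eq_of_fst op Ψ hΨ (AlexQuandle.of f a) (AlexQuandle.of f b)
    rwa [AlexQuandle.of_act_of, hΨ_of, hΨ_of, hΨ_of] at h

theorem stmt17 {E G : Type*} [Group E] [Group G]
    (π : E →* G) (hπ : Function.Surjective π)
    (f : E ≃* E) (hfA : ∀ a : E, a ∈ π.ker ↔ f a ∈ π.ker)
    (f₁ : G ≃* G) (hf₁ : ∀ a : E, f₁ (π a) = π (f a))
    (f₂ : π.ker → π.ker) (hf₂ : ∀ s : π.ker, (f₂ s : E) = f (s : E)) :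
    ∃ α : G → G → π.ker → π.ker → π.ker,
      -- α is a dynamical 2-cocycle on the quandle Alex_{f₁}(G)
      IsDynCocycle (fun x y : G => f₁ (x * y⁻¹) * y) α ∧
      -- on the fiber over 1 the induced operation is that of Alex_{f₂}(A)
      (∀ s t : π.ker, α 1 1 s t = f₂ (s * t⁻¹) * t) ∧
      -- Alex_f(E) ≅ Alex_{f₁}(G) ×_α A
      ∃ Ψ : E → G × π.ker, Function.Bijective Ψ ∧
        ∀ a b : E,
          Ψ (f (a * b⁻¹) * b) =
            (f₁ ((Ψ a).1 * (Ψ b).1⁻¹) * (Ψ b).1,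
              α (Ψ a).1 (Ψ b).1 (Ψ a).2 (Ψ b).2) :=
  stmt17_general π hπ f f₁ hf₁ f₂ hf₂
end
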